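/- Let G = (V,E) be a DAG, let X, Y, Z ⊆ V be pairwise disjoint node sets, and let A ⊆ X ∪ Y, B ⊆ X, and C ⊆ Dpcp(X,Y). Then Z satisfies CBC(A,B,C) relative to (X,Y) if and only if Z satisfies the constructive back-door criterion (CBC) relative to (X,Y). -/

import Mathlib

/-!
Common definitions: mixed graphs, walks, colliders, m-separation,
ancestral graphs, DAGs, MAGs, proper causal paths, adjustment criteria,
inducing paths, and MAG marginalization.
-/

universe u

/-- The four possible kinds of edges of a mixed graph, oriented along the
direction of traversal: `u → v`, `u ← v`, `u ↔ v`, `u − v`. -/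
inductive EType where
  | right : EType
  | left : EType
  | both : EType
  | undirEdge : EType
deriving DecidableEq

namespace EType

/-- The edge has an arrowhead at its first endpoint. -/
def headFst : EType → Prop
  | .left => True
  | .both => True
  | _ => False

/-- The edge has an arrowhead at its second endpoint. -/
def headSnd : EType → Prop
  | .right => True
  | .both => True
  | _ => False

end EType

/-- A mixed graph with directed, bidirected and undirected edges. -/
structure MixedGraph (V : Type u) where
  dir : V → V → Prop
  bi : V → V → Prop
  undir : V → V → Prop
  bi_symm : ∀ u v, bi u v → bi v u
  undir_symm : ∀ u v, undir u v → undir v u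

namespace MixedGraph

variable {V : Type u}

/-- `G.IsEdge e u v` holds if the graph contains the edge `e` from `u` to `v`
(read in the direction of traversal). -/
def IsEdge (G : MixedGraph V) : EType → V → V → Prop
  | .right, u, v => G.dir u v
  | .left, u, v => G.dir v u
  | .both, u, v => G.bi u v
  | .undirEdge, u, v => G.undir u v

/-- Walks in a mixed graph, remembering the type of every traversed edge. -/
inductive Walk (G : MixedGraph V) : V → V → Type u
  | nil (v : V) : Walk G v v
  | cons (u v w : V) (e : EType) (h : G.IsEdge e u v) (p : Walk G v w) : Walk G u w

namespace Walk

variable {G : MixedGraph V}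

/-- The list of nodes visited by a walk (with multiplicity). -/
def support : {a b : V} → G.Walk a b → List V
  | _, _, .nil v => [v]
  | _, _, .cons u _ _ _ _ p => u :: p.support

/-- A path is a walk without repeated nodes. -/
def IsPath {a b : V} (p : G.Walk a b) : Prop := p.support.Nodup

/-- Auxiliary m-connectivity check: `ph` records whether the previous edge of
the walk has an arrowhead at the current start node.  At every interior node,
the node must be a collider (two arrowheads meet) iff it belongs to `Z`. -/
def connFrom (Z : Set V) : Prop → {a b : V} → G.Walk a b → Prop
  | _, _, _, .nil _ => True
  | ph, _, _, .cons u _ _ e _ p =>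
      ((ph ∧ e.headFst) ↔ u ∈ Z) ∧ p.connFrom Z e.headSnd

/-- The walk m-connects its endpoints given `Z`: all colliders and only
colliders on it are in `Z`. -/
def ConnBy (Z : Set V) : {a b : V} → G.Walk a b → Prop
  | _, _, .nil _ => True
  | _, _, .cons _ _ _ e _ p => p.connFrom Z e.headSnd

/-- A causal (directed) walk: every edge points towards the end node. -/
def IsCausal : {a b : V} → G.Walk a b → Prop
  | _, _, .nil _ => True
  | _, _, .cons _ _ _ e _ p => e = EType.right ∧ p.IsCausal

/-- A walk is proper w.r.t. `X` if only its start node may belong to `X`. -/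
def ProperFrom (X : Set V) : {a b : V} → G.Walk a b → Prop
  | _, _, .nil _ => True
  | _, _, .cons _ _ _ _ _ p => ∀ n ∈ p.support, n ∉ X

/-- Concatenation of walks. -/
def append : {a b c : V} → G.Walk a b → G.Walk b c → G.Walk a c
  | _, _, _, .nil _, q => q
  | _, _, _, .cons u v _ e h p, q => .cons u v _ e h (p.append q)

/-- The walk is nonempty and its first edge has an arrowhead at the start
node. -/
def headAtStart : {a b : V} → G.Walk a b → Prop
  | _, _, .nil _ => False
  | _, _, .cons _ _ _ e _ _ => e.headFst

/-- The walk is nonempty and its last edge has an arrowhead at the end node. -/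
def headAtEnd : {a b : V} → G.Walk a b → Prop
  | _, _, .nil _ => False
  | _, _, .cons _ _ _ e _ (.nil _) => e.headSnd
  | _, _, .cons _ _ _ _ _ p => p.headAtEnd

/-- `P` holds of every (ordered) pair of consecutive nodes of the walk. -/
def edgeProp (P : V → V → Prop) : {a b : V} → G.Walk a b → Prop
  | _, _, .nil _ => True
  | _, _, .cons u v _ _ _ p => P u v ∧ p.edgeProp P

end Walk

/-- `x` and `y` are m-connected given `Z`: there is a walk between them on
which all colliders and only colliders are in `Z`. -/
def MConn (G : MixedGraph V) (Z : Set V) (x y : V) : Prop :=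
  ∃ p : G.Walk x y, p.ConnBy Z

/-- `Z` m-separates the node sets `X` and `Y`. -/
def MSep (G : MixedGraph V) (X Y Z : Set V) : Prop :=
  ∀ x ∈ X, ∀ y ∈ Y, ¬ G.MConn Z x y

/-- `Z` is an m-separator relative to `(X, Y)`: it is disjoint from `X ∪ Y`
and m-separates `X` and `Y`. -/
def IsMSep (G : MixedGraph V) (X Y Z : Set V) : Prop :=
  Disjoint Z (X ∪ Y) ∧ G.MSep X Y Z

/-- An `M`-minimal m-separator relative to `(X, Y)`. -/
def IsMinMSep (G : MixedGraph V) (X Y M Z : Set V) : Prop :=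
  G.IsMSep X Y Z ∧ M ⊆ Z ∧ ∀ Z', Z' ⊂ Z → M ⊆ Z' → ¬ G.IsMSep X Y Z'

/-- One step of the anterior relation: a directed or undirected edge. -/
def antEdge (G : MixedGraph V) (u v : V) : Prop := G.dir u v ∨ G.undir u v

/-- `u` is an anterior of `v` (every node is its own anterior). -/
def Anterior (G : MixedGraph V) (u v : V) : Prop :=
  Relation.ReflTransGen G.antEdge u v

/-- The set of anteriors of nodes of `W`. -/
def Ant (G : MixedGraph V) (W : Set V) : Set V := {u | ∃ w ∈ W, G.Anterior u w}

/-- `v` is a descendant of `u`, i.e. there is a directed path `u → ⋯ → v`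
(every node is its own descendant/ancestor). -/
def Anc (G : MixedGraph V) (u v : V) : Prop := Relation.ReflTransGen G.dir u v

/-- The set of descendants of nodes of `W`. -/
def De (G : MixedGraph V) (W : Set V) : Set V := {v | ∃ w ∈ W, G.Anc w v}

/-- The set of ancestors of nodes of `W`. -/
def AnSet (G : MixedGraph V) (W : Set V) : Set V := {v | ∃ w ∈ W, G.Anc v w}

/-- An ancestral graph: (1) for each edge `a ← b` or `a ↔ b`, `a` is not an
anterior of `b`; (2) for each edge `a − b` there is no edge `a ← c`, `a ↔ c`,
`b ← c` or `b ↔ c`. -/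
def IsAG (G : MixedGraph V) : Prop :=
  (∀ a b, G.dir b a ∨ G.bi a b → ¬ G.Anterior a b) ∧
  (∀ a b, G.undir a b →
    ∀ c, ¬ G.dir c a ∧ ¬ G.bi a c ∧ ¬ G.dir c b ∧ ¬ G.bi b c)

/-- A DAG: only directed edges, and no directed cycles. -/
def IsDAG (G : MixedGraph V) : Prop :=
  (∀ u v, ¬ G.bi u v) ∧ (∀ u v, ¬ G.undir u v) ∧
  (∀ v, ¬ Relation.TransGen G.dir v v)

/-- Two nodes are adjacent if they are joined by some edge. -/
def Adjacent (G : MixedGraph V) (u v : V) : Prop :=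
  G.dir u v ∨ G.dir v u ∨ G.bi u v ∨ G.undir u v

/-- A maximal ancestral graph (MAG): only directed and bidirected edges, no
directed cycle, no almost-directed cycle, and every pair of non-adjacent
nodes can be m-separated by some set of the remaining nodes. -/
def IsMAG (G : MixedGraph V) : Prop :=
  (∀ u v, ¬ G.undir u v) ∧
  (∀ v, ¬ Relation.TransGen G.dir v v) ∧
  (∀ u v, G.bi u v → ¬ Relation.TransGen G.dir v u) ∧
  (∀ u v, u ≠ v → ¬ G.Adjacent u v →
    ∃ Z : Set V, u ∉ Z ∧ v ∉ Z ∧ ¬ G.MConn Z u v)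

/-- `PCP G X Y`: the set of nodes, excluding nodes of `X`, that lie on a
proper causal path from `X` to `Y`. -/
def PCP (G : MixedGraph V) (X Y : Set V) : Set V :=
  {w | w ∉ X ∧ ∃ x ∈ X, ∃ y ∈ Y, ∃ p : G.Walk x y,
    p.IsPath ∧ p.IsCausal ∧ p.ProperFrom X ∧ w ∈ p.support}

/-- `Dpcp G X Y`: the descendants of nodes on proper causal paths. -/
def Dpcp (G : MixedGraph V) (X Y : Set V) : Set V := G.De (G.PCP X Y)

/-- Remove from `G` all edges into `A` and all edges out of `B`. -/
def rmInOut (G : MixedGraph V) (A B : Set V) : MixedGraph V where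
  dir u v := G.dir u v ∧ v ∉ A ∧ u ∉ B
  bi u v := G.bi u v ∧ u ∉ A ∧ v ∉ A
  undir u v := G.undir u v ∧ u ∉ B ∧ v ∉ B
  bi_symm := fun u v h => ⟨G.bi_symm u v h.1, h.2.2, h.2.1⟩
  undir_symm := fun u v h => ⟨G.undir_symm u v h.1, h.2.2, h.2.1⟩

/-- The parametrized proper back-door graph: remove every edge `x → d` with
`x ∈ X` and `d ∈ PCP(X,Y) ∪ C`. -/
def pbdC (G : MixedGraph V) (X Y C : Set V) : MixedGraph V where
  dir u v := G.dir u v ∧ ¬(u ∈ X ∧ v ∈ G.PCP X Y ∪ C)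
  bi := G.bi
  undir := G.undir
  bi_symm := G.bi_symm
  undir_symm := G.undir_symm

/-- The proper back-door graph. -/
def pbd (G : MixedGraph V) (X Y : Set V) : MixedGraph V := G.pbdC X Y ∅

/-- The adjustment criterion (AC) in a DAG: (a) no element of `Z` is a
descendant in `G_{X̄}` of a node outside `X` lying on a proper causal path
from `X` to `Y`; (b) every proper non-causal path from `X` to `Y` is blocked
by `Z`. -/
def SatisfiesACdag (G : MixedGraph V) (X Y Z : Set V) : Prop :=
  (∀ z ∈ Z, z ∉ (G.rmInOut X ∅).De (G.PCP X Y)) ∧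
  (∀ x ∈ X, ∀ y ∈ Y, ∀ p : G.Walk x y,
    p.IsPath → p.ProperFrom X → ¬ p.IsCausal → ¬ p.ConnBy Z)

/-- The adjustment criterion (AC) in a MAG: (a) no element of `Z` is a
descendant in `M` of a node outside `X` lying on a proper causal path from
`X` to `Y`; (b) every proper non-causal path from `X` to `Y` is blocked by
`Z`. -/
def SatisfiesACmag (G : MixedGraph V) (X Y Z : Set V) : Prop :=
  (∀ z ∈ Z, z ∉ G.Dpcp X Y) ∧
  (∀ x ∈ X, ∀ y ∈ Y, ∀ p : G.Walk x y,
    p.IsPath → p.ProperFrom X → ¬ p.IsCausal → ¬ p.ConnBy Z)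

/-- The constructive back-door criterion (CBC): (a) `Z` avoids
`Dpcp(X,Y)`; (b) `Z` m-separates `X` and `Y` in the proper back-door
graph. -/
def SatisfiesCBC (G : MixedGraph V) (X Y Z : Set V) : Prop :=
  (∀ z ∈ Z, z ∉ G.Dpcp X Y) ∧ (G.pbd X Y).MSep X Y Z

/-- The parametrized constructive back-door criterion CBC(A,B,C). -/
def SatisfiesCBCP (G : MixedGraph V) (X Y Z A B C : Set V) : Prop :=
  (∀ z ∈ Z, z ∉ (G.rmInOut A B).De (G.PCP X Y)) ∧ (G.pbdC X Y C).MSep X Y Z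

namespace Walk

variable {G : MixedGraph V}

/-- Auxiliary check for inducing paths: every interior non-collider is in
`L`, and every interior collider is an ancestor of a node of `T`.  `ph`
records whether the previous edge has an arrowhead at the current node. -/
def indFrom (L T : Set V) : Prop → {a b : V} → G.Walk a b → Prop
  | _, _, _, .nil _ => True
  | ph, _, _, .cons u _ _ e _ p =>
      ((ph ∧ e.headFst) → ∃ t ∈ T, Relation.ReflTransGen G.dir u t) ∧
      (¬(ph ∧ e.headFst) → u ∈ L) ∧ p.indFrom L T e.headSnd

/-- Interior conditions for inducing paths (endpoints are exempt). -/
def indBody (L T : Set V) : {a b : V} → G.Walk a b → Prop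
  | _, _, .nil _ => True
  | _, _, .cons _ _ _ e _ p => p.indFrom L T e.headSnd

end Walk

/-- `p` is an inducing path with respect to `Z` and `L`: a path on which
every non-collider other than the endpoints is in `L` and every collider is
an ancestor of the endpoints or of `Z`. -/
def IsInducing (G : MixedGraph V) (Z L : Set V) {a b : V} (p : G.Walk a b) : Prop :=
  p.IsPath ∧ p.indBody L ({a, b} ∪ Z)

/-- Adjacency in the MAG `G[∅_L`: `u, v ∉ L` are adjacent iff they cannot be
d-separated in `G` by any set `W ⊆ V∖L` (not containing `u, v`). -/
def magAdj (G : MixedGraph V) (L : Set V) (u v : V) : Prop :=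
  u ∉ L ∧ v ∉ L ∧ u ≠ v ∧
  ∀ W : Set V, Disjoint W L → u ∉ W → v ∉ W → (G.MConn W u v ∧ G.MConn W v u)

/-- The MAG `G[∅_L` obtained from the DAG `G` by marginalizing `L`: adjacent
`u, v` are joined by `u → v` if `u` is an ancestor of `v` in `G` and `v` is
not an ancestor of `u`, and by `u ↔ v` if neither is an ancestor of the
other. -/
def mag (G : MixedGraph V) (L : Set V) : MixedGraph V where
  dir u v := G.magAdj L u v ∧ G.Anc u v ∧ ¬ G.Anc v u
  bi u v := G.magAdj L u v ∧ ¬ G.Anc u v ∧ ¬ G.Anc v u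
  undir _ _ := False
  bi_symm := fun u v h =>
    ⟨⟨h.1.2.1, h.1.1, h.1.2.2.1.symm,
      fun W hW hv hu => ⟨(h.1.2.2.2 W hW hu hv).2, (h.1.2.2.2 W hW hu hv).1⟩⟩,
      h.2.2, h.2.1⟩
  undir_symm := fun _ _ h => h.elim

/-- An inducing `Z`-trail in the MAG `G[∅_L`: a path whose interior nodes are
exactly the `Z`-nodes on it, each consecutive pair being linked in `G` by an
inducing path w.r.t. `∅, L` which has arrowheads at the interior nodes. -/
def IsInducingZTrail (G : MixedGraph V) (Z L : Set V) {a b : V}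
    (p : (G.mag L).Walk a b) : Prop :=
  p.IsPath ∧ a ∉ Z ∧ b ∉ Z ∧
  (∀ v ∈ p.support, v ≠ a → v ≠ b → v ∈ Z) ∧
  p.edgeProp (fun u v => ∃ q : G.Walk u v, G.IsInducing ∅ L q ∧
    (u ∈ Z → q.headAtStart) ∧ (v ∈ Z → q.headAtEnd))

end MixedGraph

open MixedGraph

variable {V : Type u}


namespace MixedGraph

variable {G H : MixedGraph V}

namespace Walk

lemma start_mem_support : ∀ {a b : V} (p : G.Walk a b), a ∈ p.support
  | _, _, .nil v => List.mem_singleton.mpr rfl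
  | _, _, .cons _ _ _ _ _ _ => List.mem_cons_self

lemma end_mem_support : ∀ {a b : V} (p : G.Walk a b), b ∈ p.support
  | _, _, .nil v => List.mem_singleton.mpr rfl
  | _, _, .cons _ _ _ _ _ p => List.mem_cons_of_mem _ (end_mem_support p)

lemma causal_reach : ∀ {a b : V} (p : G.Walk a b), p.IsCausal →
    ∀ n ∈ p.support, Relation.ReflTransGen G.dir a n
  | _, _, .nil v, _, n, hn => by
      rw [List.mem_singleton.mp hn]
  | _, _, .cons u v w e h p, hc, n, hn => by
      obtain ⟨rfl, hc2⟩ := hc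
      rcases List.mem_cons.mp hn with rfl | h1
      · exact .refl
      · exact .head h (causal_reach p hc2 n h1)

lemma causal_nodup (hacy : ∀ v, ¬ Relation.TransGen G.dir v v) :
    ∀ {a b : V} (p : G.Walk a b), p.IsCausal → p.support.Nodup
  | _, _, .nil v, _ => List.nodup_singleton v
  | _, _, .cons u v w e h p, hc => by
      obtain ⟨rfl, hc2⟩ := hc
      refine List.nodup_cons.mpr ⟨fun hu => ?_, causal_nodup hacy p hc2⟩
      exact hacy u (Relation.TransGen.head' h (causal_reach p hc2 u hu))

lemma connFrom_false_connBy {Z : Set V} : ∀ {a b : V} {p : G.Walk a b},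
    p.connFrom Z False → p.ConnBy Z
  | _, _, .nil _, _ => trivial
  | _, _, .cons u v w e h p, hc => hc.2

lemma causal_connFrom {Z : Set V} : ∀ {a b : V} (p : G.Walk a b), p.IsCausal →
    (∀ n ∈ p.support, n ∉ Z) → ∀ ph : Prop, p.connFrom Z ph
  | _, _, .nil _, _, _, _ => trivial
  | _, _, .cons u v w e h p, hc, hZ, ph => by
      obtain ⟨rfl, hc2⟩ := hc
      refine ⟨?_, causal_connFrom p hc2 (fun n hn => hZ n (List.mem_cons_of_mem _ hn)) _⟩
      exact iff_of_false (fun h' => h'.2) (hZ u (List.mem_cons_self))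

lemma walk_suffix : ∀ {a b : V} (p : G.Walk a b) (w : V), w ∈ p.support →
    ∃ q : G.Walk w b, (p.IsCausal → q.IsCausal) ∧ ∀ n ∈ q.support, n ∈ p.support
  | _, _, .nil v, w, hw => by
      obtain rfl := List.mem_singleton.mp hw
      exact ⟨.nil w, fun _ => trivial, fun n hn => hn⟩
  | _, _, .cons u v w' e h p, w, hw => by
      rcases List.mem_cons.mp hw with rfl | hw'
      · exact ⟨.cons w v w' e h p, fun hc => hc, fun n hn => hn⟩
      · obtain ⟨q, h1, h2⟩ := walk_suffix p w hw'
        exact ⟨q, fun hc => h1 hc.2, fun n hn => List.mem_cons_of_mem _ (h2 n hn)⟩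

lemma walk_prefix : ∀ {a b : V} (p : G.Walk a b) (w : V), w ∈ p.support →
    ∃ q : G.Walk a w, p.IsCausal → q.IsCausal
  | _, _, .nil v, w, hw => by
      obtain rfl := List.mem_singleton.mp hw
      exact ⟨.nil w, fun _ => trivial⟩
  | _, _, .cons u v w' e h p, w, hw => by
      rcases List.mem_cons.mp hw with rfl | hw'
      · exact ⟨.nil w, fun _ => trivial⟩
      · obtain ⟨q, h1⟩ := walk_prefix p w hw'
        exact ⟨.cons u v w e h q, fun hc => ⟨hc.1, h1 hc.2⟩⟩

lemma append_causal : ∀ {a b c : V} {p : G.Walk a b} {q : G.Walk b c},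
    p.IsCausal → q.IsCausal → (p.append q).IsCausal
  | _, _, _, .nil _, q, _, hq => hq
  | _, _, _, .cons u v w e h p, q, hp, hq => ⟨hp.1, append_causal hp.2 hq⟩

lemma mem_append_left : ∀ {a b c : V} {p : G.Walk a b} (q : G.Walk b c) {n : V},
    n ∈ p.support → n ∈ (p.append q).support
  | _, _, _, .nil v, q, n, hn => by
      obtain rfl := List.mem_singleton.mp hn
      exact q.start_mem_support
  | _, _, _, .cons u v w e h p, q, n, hn => by
      rcases List.mem_cons.mp hn with rfl | hn'
      · exact List.mem_cons_self
      · exact List.mem_cons_of_mem _ (mem_append_left q hn')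

end Walk

lemma walk_map (hd : ∀ u v, G.dir u v → H.dir u v) (hb : ∀ u v, G.bi u v → H.bi u v)
    (hu : ∀ u v, G.undir u v → H.undir u v) :
    ∀ {e : EType} {u v : V}, G.IsEdge e u v → H.IsEdge e u v
  | .right, u, v, h => hd u v h
  | .left, u, v, h => hd v u h
  | .both, u, v, h => hb u v h
  | .undirEdge, u, v, h => hu u v h

lemma walk_transfer (hd : ∀ u v, G.dir u v → H.dir u v) (hb : ∀ u v, G.bi u v → H.bi u v)
    (hu : ∀ u v, G.undir u v → H.undir u v) :
    ∀ {a b : V} (p : G.Walk a b),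
    ∃ q : H.Walk a b, q.support = p.support ∧ (p.IsCausal → q.IsCausal) ∧
      (∀ (Z : Set V) (ph : Prop), p.connFrom Z ph → q.connFrom Z ph) ∧
      (∀ Z : Set V, p.ConnBy Z → q.ConnBy Z)
  | _, _, .nil v => ⟨.nil v, rfl, fun _ => trivial, fun _ _ _ => trivial, fun _ _ => trivial⟩
  | _, _, .cons u v w e h p => by
      obtain ⟨q, hs, hcau, hcf, _⟩ := walk_transfer hd hb hu p
      exact ⟨.cons u v w e (walk_map hd hb hu h) q, by simp [Walk.support, hs],
        fun hc => ⟨hc.1, hcau hc.2⟩,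
        fun Z ph hc => ⟨hc.1, hcf Z _ hc.2⟩,
        fun Z hc => hcf Z _ hc⟩

lemma rtg_walk {a b : V} (h : Relation.ReflTransGen G.dir a b) :
    ∃ q : G.Walk a b, q.IsCausal := by
  induction h with
  | refl => exact ⟨.nil a, trivial⟩
  | tail _ hd ih =>
      obtain ⟨q, hq⟩ := ih
      exact ⟨q.append (.cons _ _ _ .right hd (.nil _)), Walk.append_causal hq ⟨rfl, trivial⟩⟩

end MixedGraph
namespace MixedGraph

variable {G : MixedGraph V}

/-- If a causal walk ends in `Y∖X` and passes through `X`, its endpoint is in `PCP`. -/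
lemma lastX (hacy : ∀ v, ¬ Relation.TransGen G.dir v v) {X Y : Set V} :
    ∀ {a b : V} (p : G.Walk a b), p.IsCausal → b ∈ Y → b ∉ X →
      (∃ n ∈ p.support, n ∈ X) → b ∈ G.PCP X Y
  | _, _, .nil v, _, hbY, hbX, ⟨n, hn, hnX⟩ => by
      rw [List.mem_singleton.mp hn] at hnX; exact absurd hnX hbX
  | _, _, .cons u v w e h p, hc, hbY, hbX, ⟨n, hn, hnX⟩ => by
      by_cases hp : ∃ m ∈ p.support, m ∈ X
      · exact lastX hacy p hc.2 hbY hbX hp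
      · push_neg at hp
        have huX : u ∈ X := by
          rcases List.mem_cons.mp hn with rfl | hn'
          · exact hnX
          · exact absurd hnX (hp n hn')
        obtain ⟨rfl, hc2⟩ := hc
        refine ⟨hbX, u, huX, w, hbY, .cons u v w .right h p,
          List.nodup_cons.mpr ⟨fun hus => hp u hus huX, Walk.causal_nodup hacy p hc2⟩,
          ⟨rfl, hc2⟩, hp, Walk.end_mem_support _⟩

/-- A causal walk in the proper back-door graph through `X` ending in `Y` is impossible. -/
lemma keyCausal (hacy : ∀ v, ¬ Relation.TransGen G.dir v v) {X Y : Set V}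
    (hXY : Disjoint X Y) :
    ∀ {a b : V} (p : (G.pbd X Y).Walk a b), p.IsCausal → b ∈ Y →
      (∃ n ∈ p.support, n ∈ X) → False
  | _, _, .nil v, _, hbY, ⟨n, hn, hnX⟩ => by
      rw [List.mem_singleton.mp hn] at hnX
      exact Set.disjoint_left.mp hXY hnX hbY
  | _, _, .cons u v w e h p, hc, hbY, ⟨n, hn, hnX⟩ => by
      by_cases hp : ∃ m ∈ p.support, m ∈ X
      · exact keyCausal hacy hXY p hc.2 hbY hp
      · push_neg at hp
        have huX : u ∈ X := by
          rcases List.mem_cons.mp hn with rfl | hn'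
          · exact hnX
          · exact absurd hnX (hp n hn')
        obtain ⟨rfl, hc2⟩ := hc
        obtain ⟨q, hqs, hqc, -, -⟩ :=
          walk_transfer (G := G.pbd X Y) (H := G) (fun _ _ hh => hh.1)
            (fun _ _ hh => hh) (fun _ _ hh => hh) p
        have hdir : G.dir u v := h.1
        have hvP : v ∈ G.PCP X Y := by
          refine ⟨hp v p.start_mem_support, u, huX, w, hbY, .cons u v w .right hdir q,
            List.nodup_cons.mpr ⟨fun hus => hp u (hqs ▸ hus) huX,
              Walk.causal_nodup hacy q (hqc hc2)⟩,
            ⟨rfl, hqc hc2⟩, fun m hm => hp m (hqs ▸ hm), ?_⟩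
          exact List.mem_cons_of_mem _ (hqs ▸ q.start_mem_support)
        exact h.2 ⟨huX, Set.mem_union_left _ hvP⟩

/-- A connecting walk in the proper back-door graph entering `Dpcp` with an
arrowhead must continue causally (when `Z` avoids `Dpcp`). -/
lemma causalTail (hundir : ∀ u v, ¬ G.undir u v) {X Y Z : Set V}
    (ha : ∀ z ∈ Z, z ∉ G.Dpcp X Y) :
    ∀ {c d : V} (p : (G.pbd X Y).Walk c d), c ∈ G.Dpcp X Y → p.connFrom Z True → p.IsCausal
  | _, _, .nil _, _, _ => trivial
  | _, _, .cons c v w e h p, hcD, hcf => by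
      have hcZ : c ∉ Z := fun hz => ha c hz hcD
      have hf : ¬ e.headFst := fun hf => hcZ (hcf.1.mp ⟨trivial, hf⟩)
      cases e with
      | left => exact absurd trivial hf
      | both => exact absurd trivial hf
      | undirEdge => exact absurd h (hundir c v)
      | right =>
          have hdir : G.dir c v := h.1
          have hvD : v ∈ G.Dpcp X Y := by
            obtain ⟨w', hw', hrtg⟩ := hcD
            exact ⟨w', hw', hrtg.tail hdir⟩
          exact ⟨rfl, causalTail hundir ha p hvD hcf.2⟩

/-- Transfer a causal walk avoiding `X` into the parametrized back-door graph. -/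
lemma toPbdC {X Y C : Set V} : ∀ {a b : V} (q : G.Walk a b), q.IsCausal →
    (∀ n ∈ q.support, n ∉ X) →
    ∃ q' : (G.pbdC X Y C).Walk a b, q'.IsCausal ∧ q'.support = q.support
  | _, _, .nil v, _, _ => ⟨.nil v, trivial, rfl⟩
  | _, _, .cons u v w e h q, hc, hX => by
      obtain ⟨rfl, hc2⟩ := hc
      obtain ⟨q', h1, h2⟩ := toPbdC q hc2 (fun n hn => hX n (List.mem_cons_of_mem _ hn))
      exact ⟨.cons u v w .right ⟨h, fun hx => hX u (List.mem_cons_self) hx.1⟩ q',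
        ⟨rfl, h1⟩, by simp [Walk.support, h2]⟩

end MixedGraph
namespace MixedGraph

variable {G : MixedGraph V}

/-- Core construction: from any `G_{Ā,B̲}`-descendant `u` of `PCP(X,Y)` there is a
connecting walk in the parametrized back-door graph from `u` to `Y` whose
initial node carries no arrowhead and is checked against `Z`. -/
lemma connLemma {X Y Z A B C : Set V}
    (ha' : ∀ z ∈ Z, z ∉ (G.rmInOut A B).De (G.PCP X Y))
    (hb' : (G.pbdC X Y C).MSep X Y Z) :
    ∀ {u w : V}, w ∈ G.PCP X Y → Relation.ReflTransGen (G.rmInOut A B).dir w u →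
      ∃ y₀ ∈ Y, ∃ ω : (G.pbdC X Y C).Walk u y₀, ω.connFrom Z False := by
  intro u w hw hr
  induction hr with
  | refl =>
      obtain ⟨hwX, x₀, hx₀, y₀, hy₀, ρ, hpath, hcaus, hprop, hws⟩ := hw
      cases ρ with
      | nil v =>
          rw [List.mem_singleton.mp hws] at hwX
          exact absurd hx₀ hwX
      | cons _ v _ e h ρ' =>
          rcases List.mem_cons.mp hws with rfl | hws'
          · exact absurd hx₀ hwX
          · obtain ⟨q, hqc, hqs⟩ := Walk.walk_suffix ρ' w hws'
            have hcq : q.IsCausal := hqc hcaus.2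
            have hsub : ∀ n ∈ q.support, n ∈ G.PCP X Y := by
              intro n hn
              exact ⟨hprop n (hqs n hn), x₀, hx₀, y₀, hy₀,
                .cons x₀ v y₀ e h ρ', hpath, hcaus, hprop,
                List.mem_cons_of_mem _ (hqs n hn)⟩
            obtain ⟨q', h1, h2⟩ := toPbdC (Y := Y) (C := C) q hcq
              (fun n hn => hprop n (hqs n hn))
            refine ⟨y₀, hy₀, q', Walk.causal_connFrom q' h1 ?_ False⟩
            intro n hn hz
            exact ha' n hz ⟨n, hsub n (h2 ▸ hn), .refl⟩
  | @tail v u' hr' hstep ih =>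
      obtain ⟨y₀, hy₀, ω, hω⟩ := ih
      by_cases hrem : v ∈ X ∧ u' ∈ G.PCP X Y ∪ C
      · exact absurd ⟨ω, Walk.connFrom_false_connBy hω⟩ (hb' v hrem.1 y₀ hy₀)
      · refine ⟨y₀, hy₀, .cons u' v y₀ .left ⟨hstep.1, hrem⟩ ω, ?_, hω⟩
        exact iff_of_false (fun hh => hh.1)
          (fun hz => ha' u' hz ⟨w, hw, hr'.tail hstep⟩)

lemma xNotInS {X Y Z A B C : Set V}
    (ha' : ∀ z ∈ Z, z ∉ (G.rmInOut A B).De (G.PCP X Y))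
    (hb' : (G.pbdC X Y C).MSep X Y Z) {u : V} (hu : u ∈ X)
    {w : V} (hw : w ∈ G.PCP X Y)
    (hr : Relation.ReflTransGen (G.rmInOut A B).dir w u) : False := by
  obtain ⟨y₀, hy₀, ω, hω⟩ := connLemma ha' hb' hw hr
  exact hb' u hu y₀ hy₀ ⟨ω, Walk.connFrom_false_connBy hω⟩

/-- Step 1: conditions (a′) and (b′) imply condition (a). -/
lemma stepOne (hacy : ∀ v, ¬ Relation.TransGen G.dir v v) {X Y Z A B C : Set V}
    (hXY : Disjoint X Y) (hA : A ⊆ X ∪ Y) (hB : B ⊆ X)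
    (ha' : ∀ z ∈ Z, z ∉ (G.rmInOut A B).De (G.PCP X Y))
    (hb' : (G.pbdC X Y C).MSep X Y Z) :
    ∀ z ∈ Z, z ∉ G.Dpcp X Y := by
  intro z hz hzD
  obtain ⟨w, hwP, hrtg⟩ := hzD
  have hzS : z ∉ (G.rmInOut A B).De (G.PCP X Y) := ha' z hz
  have exit : ∀ {t : V}, Relation.ReflTransGen G.dir w t →
      t ∉ (G.rmInOut A B).De (G.PCP X Y) →
      ∃ u' t', u' ∈ (G.rmInOut A B).De (G.PCP X Y) ∧ G.dir u' t' ∧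
        t' ∉ (G.rmInOut A B).De (G.PCP X Y) := by
    intro t h1
    induction h1 with
    | refl => exact fun hcon => absurd ⟨w, hwP, .refl⟩ hcon
    | @tail b c h2 h3 ih =>
        intro hcS
        by_cases hbS : b ∈ (G.rmInOut A B).De (G.PCP X Y)
        · exact ⟨b, c, hbS, h3, hcS⟩
        · exact ih hbS
  obtain ⟨u, t, huS, hut, htS⟩ := exit hrtg hzS
  obtain ⟨w', hw', hr'⟩ := huS
  have hta : t ∈ A ∨ u ∈ B := by
    by_contra hcon
    push_neg at hcon
    exact htS ⟨w', hw', hr'.tail ⟨hut, hcon.1, hcon.2⟩⟩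
  rcases hta with htA | huB
  · rcases hA htA with htX | htY
    · by_cases huX : u ∈ X
      · exact xNotInS ha' hb' huX hw' hr'
      · obtain ⟨y₀, hy₀, ω, hω⟩ := connLemma ha' hb' hw' hr'
        exact hb' t htX y₀ hy₀
          ⟨.cons t u y₀ .left ⟨hut, fun hh => huX hh.1⟩ ω, hω⟩
    · -- t ∈ Y: then t ∈ PCP, contradicting t ∉ S
      have htG : Relation.ReflTransGen G.dir w' t :=
        (Relation.ReflTransGen.mono (r := (G.rmInOut A B).dir) (p := G.dir) (fun a b hab => hab.1) _ _ hr').tail hut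
      obtain ⟨hw'X, x₀, hx₀, y₀', hy₀', ρ, hpath, hcaus, hprop, hmem⟩ := hw'
      obtain ⟨q1, hq1⟩ := Walk.walk_prefix ρ w' hmem
      obtain ⟨q2, hq2⟩ := rtg_walk htG
      have htP : t ∈ G.PCP X Y :=
        lastX hacy (q1.append q2) (Walk.append_causal (hq1 hcaus) hq2) htY
          (fun htX => Set.disjoint_left.mp hXY htX htY)
          ⟨x₀, Walk.mem_append_left q2 q1.start_mem_support, hx₀⟩
      exact htS ⟨t, htP, .refl⟩
  · exact xNotInS ha' hb' (hB huB) hw' hr'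

end MixedGraph
namespace MixedGraph

variable {G : MixedGraph V}

/-- Step 2 core: any partially-connecting walk in the proper back-door graph
ending in `Y` transfers to the parametrized back-door graph. -/
lemma stepTwoAux (hbi : ∀ u v, ¬ G.bi u v) (hundir : ∀ u v, ¬ G.undir u v)
    (hacy : ∀ v, ¬ Relation.TransGen G.dir v v) {X Y Z C : Set V}
    (hXY : Disjoint X Y) (hC : C ⊆ G.Dpcp X Y)
    (ha : ∀ z ∈ Z, z ∉ G.Dpcp X Y)
    (hb' : (G.pbdC X Y C).MSep X Y Z) :
    ∀ {a b : V} (ω : (G.pbd X Y).Walk a b), b ∈ Y → ∀ ph : Prop, ω.connFrom Z ph →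
      ∃ ω' : (G.pbdC X Y C).Walk a b, ω'.connFrom Z ph
  | _, _, .nil v, _, _, _ => ⟨.nil v, trivial⟩
  | _, _, .cons u v w e h p, hbY, ph, hcf => by
      cases e with
      | both => exact absurd h (hbi u v)
      | undirEdge => exact absurd h (hundir u v)
      | right =>
          by_cases hrem : u ∈ X ∧ v ∈ G.PCP X Y ∪ C
          · have hvD : v ∈ G.Dpcp X Y := by
              rcases hrem.2 with h1 | h1
              · exact ⟨v, h1, .refl⟩
              · exact hC h1
            have hcaus : p.IsCausal := causalTail hundir ha p hvD hcf.2
            exact absurd ⟨u, List.mem_cons_self, hrem.1⟩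
              (fun hh => keyCausal hacy hXY (.cons u v w .right h p) ⟨rfl, hcaus⟩ hbY hh)
          · obtain ⟨p', hp'⟩ := stepTwoAux hbi hundir hacy hXY hC ha hb' p hbY _ hcf.2
            exact ⟨.cons u v w .right ⟨h.1, hrem⟩ p', hcf.1, hp'⟩
      | left =>
          by_cases hrem : v ∈ X ∧ u ∈ G.PCP X Y ∪ C
          · obtain ⟨p', hp'⟩ := stepTwoAux hbi hundir hacy hXY hC ha hb' p hbY False hcf.2
            exact ((hb' v hrem.1 w hbY) ⟨p', Walk.connFrom_false_connBy hp'⟩).elim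
          · obtain ⟨p', hp'⟩ := stepTwoAux hbi hundir hacy hXY hC ha hb' p hbY _ hcf.2
            exact ⟨.cons u v w .left ⟨h.1, hrem⟩ p', hcf.1, hp'⟩

/-- Step 2: given (a) and (b′), no connecting walk from `X` to `Y` exists in the
proper back-door graph. -/
lemma stepTwo (hbi : ∀ u v, ¬ G.bi u v) (hundir : ∀ u v, ¬ G.undir u v)
    (hacy : ∀ v, ¬ Relation.TransGen G.dir v v) {X Y Z C : Set V}
    (hXY : Disjoint X Y) (hC : C ⊆ G.Dpcp X Y)
    (ha : ∀ z ∈ Z, z ∉ G.Dpcp X Y)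
    (hb' : (G.pbdC X Y C).MSep X Y Z) :
    ∀ {a b : V} (ω : (G.pbd X Y).Walk a b), a ∈ X → b ∈ Y → ω.ConnBy Z → False
  | _, _, .nil v, haX, hbY, _ => Set.disjoint_left.mp hXY haX hbY
  | _, _, .cons u v w e h p, haX, hbY, hcb => by
      cases e with
      | both => exact absurd h (hbi u v)
      | undirEdge => exact absurd h (hundir u v)
      | right =>
          by_cases hrem : u ∈ X ∧ v ∈ G.PCP X Y ∪ C
          · have hvD : v ∈ G.Dpcp X Y := by
              rcases hrem.2 with h1 | h1
              · exact ⟨v, h1, .refl⟩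
              · exact hC h1
            have hcaus : p.IsCausal := causalTail hundir ha p hvD hcb
            exact keyCausal hacy hXY (.cons u v w .right h p) ⟨rfl, hcaus⟩ hbY
              ⟨u, List.mem_cons_self, haX⟩
          · obtain ⟨p', hp'⟩ := stepTwoAux hbi hundir hacy hXY hC ha hb' p hbY _ hcb
            exact hb' u haX w hbY ⟨.cons u v w .right ⟨h.1, hrem⟩ p', hp'⟩
      | left =>
          by_cases hrem : v ∈ X ∧ u ∈ G.PCP X Y ∪ C
          · exact stepTwo hbi hundir hacy hXY hC ha hb' p hrem.1 hbY
              (Walk.connFrom_false_connBy hcb)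
          · obtain ⟨p', hp'⟩ := stepTwoAux hbi hundir hacy hXY hC ha hb' p hbY _ hcb
            exact hb' u haX w hbY ⟨.cons u v w .left ⟨h.1, hrem⟩ p', hp'⟩

end MixedGraph

theorem statement_7 (G : MixedGraph V) (hDAG : G.IsDAG)
    (X Y Z A B C : Set V)
    (hXY : Disjoint X Y) (hXZ : Disjoint X Z) (hYZ : Disjoint Y Z)
    (hA : A ⊆ X ∪ Y) (hB : B ⊆ X) (hC : C ⊆ G.Dpcp X Y) :
    G.SatisfiesCBCP X Y Z A B C ↔ G.SatisfiesCBC X Y Z := by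
  obtain ⟨hbi, hundir, hacy⟩ := hDAG
  constructor
  · rintro ⟨ha', hb'⟩
    have haZ : ∀ z ∈ Z, z ∉ G.Dpcp X Y := stepOne hacy hXY hA hB ha' hb'
    refine ⟨haZ, ?_⟩
    rintro x hx y hy ⟨ω, hω⟩
    exact stepTwo hbi hundir hacy hXY hC haZ hb' ω hx hy hω
  · rintro ⟨ha, hb⟩
    constructor
    · intro z hz hzS
      obtain ⟨w, hw, hr⟩ := hzS
      exact ha z hz ⟨w, hw, Relation.ReflTransGen.mono (r := (G.rmInOut A B).dir) (p := G.dir) (fun a b hab => hab.1) _ _ hr⟩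
    · rintro x hx y hy ⟨ω, hω⟩
      obtain ⟨ω', -, -, -, hcb⟩ := walk_transfer (G := G.pbdC X Y C) (H := G.pbd X Y)
        (fun u v hh => ⟨hh.1, fun hc => hh.2 ⟨hc.1, by
          rcases hc.2 with h' | h'
          · exact Or.inl h'
          · exact h'.elim⟩⟩)
        (fun _ _ hh => hh) (fun _ _ hh => hh) ω
      exact hb x hx y hy ⟨ω', hcb Z hω⟩
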